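/- arXiv:2106.14013 — 6 statements merged into one kernel-verified Lean document; each statement's English description precedes it below -/
import Mathlib

section
/- Define $h(b,s) = \frac{(1-b)^2 \sin s}{1+b^2-2b\cos s}$ for $b \in [-1,1]$ and $s \in [0,\pi]$ (with the convention that $h(1,s)=0$ for $s\in(0,\pi]$). Then $b \mapsto h(b,s)$ is non-increasing on $[-1,1]$: if $-1 \le b \le c \le 1$ and $0 \le s \le \pi$, then $h(b,s) \ge h(c,s)$. -/
noncomputable def hfun (b s : ℝ) : ℝ :=
  (1 - b) ^ 2 * Real.sin s / (1 + b ^ 2 - 2 * b * Real.cos s)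

theorem stmt_2 (b c s : ℝ) (hb : -1 ≤ b) (hbc : b ≤ c) (hc : c ≤ 1)
    (hs0 : 0 ≤ s) (hsπ : s ≤ Real.pi) :
    hfun c s ≤ hfun b s := by
  have hsin : 0 ≤ Real.sin s := Real.sin_nonneg_of_nonneg_of_le_pi hs0 hsπ
  rcases eq_or_lt_of_le hsin with h0 | hpos
  · simp [hfun, ← h0]
  · have hsq : Real.sin s ^ 2 + Real.cos s ^ 2 = 1 := Real.sin_sq_add_cos_sq s
    have hcos : Real.cos s ^ 2 < 1 := by nlinarith
    have db : 0 < 1 + b ^ 2 - 2 * b * Real.cos s := by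
      nlinarith [sq_nonneg (b - Real.cos s)]
    have dc : 0 < 1 + c ^ 2 - 2 * c * Real.cos s := by
      nlinarith [sq_nonneg (c - Real.cos s)]
    rw [hfun, hfun, div_le_div_iff₀ dc db]
    have hbc1 : 0 ≤ 1 - b * c := by nlinarith
    have hcos1 : 0 ≤ 1 - Real.cos s := by nlinarith
    have key : 0 ≤ Real.sin s * ((1 - Real.cos s) * ((c - b) * (1 - b * c))) := by
      exact mul_nonneg hsin (mul_nonneg hcos1 (mul_nonneg (by linarith) hbc1))
    nlinarith [key]
end

section
/- Let $q \in (0,1)$ and define $\Psi_q^{(k)}(z) = (\log q)^{k+1} \sum_{n=1}^\infty \frac{n^k q^{nz}}{1-q^n}$ for $k \ge 1$ and $z > 0$. Then for all $z > 0$, $\Psi_q'''(z)\,\Psi_q'(z) > \left(\Psi_q''(z)\right)^2$. -/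
set_option maxHeartbeats 1000000

noncomputable def PsiDeriv (q : ℝ) (k : ℕ) (z : ℝ) : ℝ :=
  (Real.log q) ^ (k + 1) *
    ∑' n : ℕ, ((n : ℝ) + 1) ^ k * q ^ (((n : ℝ) + 1) * z) / (1 - q ^ (n + 1))

theorem stmt_8 (q : ℝ) (hq0 : 0 < q) (hq1 : q < 1) (z : ℝ) (hz : 0 < z) :
    (PsiDeriv q 2 z) ^ 2 < PsiDeriv q 3 z * PsiDeriv q 1 z := by
  set f : ℕ → ℕ → ℝ :=
    fun k n => ((n : ℝ) + 1) ^ k * q ^ (((n : ℝ) + 1) * z) / (1 - q ^ (n + 1)) with hf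
  set t : ℕ → ℝ := fun n => q ^ (((n : ℝ) + 1) * z) / (1 - q ^ (n + 1)) with htdef
  have hqlt : ∀ n : ℕ, q ^ (n + 1) < 1 := fun n =>
    pow_lt_one₀ hq0.le hq1 n.succ_ne_zero
  have ht_pos : ∀ n, 0 < t n := by
    intro n
    apply div_pos (Real.rpow_pos_of_pos hq0 _)
    linarith [hqlt n]
  have hft : ∀ k n, f k n = ((n : ℝ) + 1) ^ k * t n := fun k n => mul_div_assoc _ _ _
  have hfnn : ∀ k n, 0 ≤ f k n := by
    intro k n; rw [hft]; have := (ht_pos n).le; positivity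
  have hr0 : 0 < q ^ z := Real.rpow_pos_of_pos hq0 z
  have hr1 : q ^ z < 1 := Real.rpow_lt_one hq0.le hq1 hz
  have hq_rpow : ∀ n : ℕ, q ^ (((n : ℝ) + 1) * z) = (q ^ z) ^ (n + 1) := by
    intro n
    rw [mul_comm, Real.rpow_mul hq0.le,
      show ((n : ℝ) + 1) = ((n + 1 : ℕ) : ℝ) by push_cast; ring, Real.rpow_natCast]
  have hsum : ∀ k, Summable (f k) := by
    intro k
    have hb : Summable (fun n : ℕ => ((n : ℝ) + 1) ^ k * (q ^ z) ^ (n + 1) / (1 - q)) := by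
      have h := summable_pow_mul_geometric_of_norm_lt_one (r := q ^ z) k
        (by rw [Real.norm_eq_abs, abs_of_pos hr0]; exact hr1)
      have h2 : Summable (fun n : ℕ => ((n + 1 : ℕ) : ℝ) ^ k * (q ^ z) ^ (n + 1)) :=
        (summable_nat_add_iff 1).2 h
      exact (h2.div_const (1 - q)).congr (by intro n; push_cast; ring)
    refine Summable.of_nonneg_of_le (hfnn k) (fun n => ?_) hb
    rw [hf]
    simp only
    rw [hq_rpow n]
    have h1 : q ^ (n + 1) ≤ q := pow_le_of_le_one hq0.le hq1.le n.succ_ne_zero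
    gcongr
    all_goals first | positivity | linarith
  set S : ℕ → ℝ := fun k => ∑' n, f k n with hS
  have habs : ∀ k, Summable (fun n => ‖f k n‖) := by
    intro k
    exact (hsum k).congr (fun n => (Real.norm_of_nonneg (hfnn k n)).symm)
  have hprod : ∀ k l, (S k) * (S l) = ∑' p : ℕ × ℕ, f k p.1 * f l p.2 := by
    intro k l
    exact tsum_mul_tsum_of_summable_norm (habs k) (habs l)
  have hmul : ∀ k l, Summable (fun p : ℕ × ℕ => f k p.1 * f l p.2) := by
    intro k l
    exact (hsum k).mul_of_nonneg (hsum l) (hfnn k) (hfnn l)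
  set key : ℕ × ℕ → ℝ := fun p =>
    f 1 p.1 * f 3 p.2 + f 1 p.2 * f 3 p.1 - 2 * (f 2 p.1 * f 2 p.2) with hkeydef
  have hkey_eq : ∀ p : ℕ × ℕ, key p =
      t p.1 * t p.2 * (((p.1 : ℝ) + 1) * ((p.2 : ℝ) + 1) * ((p.1 : ℝ) - (p.2 : ℝ)) ^ 2) := by
    intro p
    simp only [hkeydef, hft]
    ring
  have hkey_nn : ∀ p, 0 ≤ key p := by
    intro p
    rw [hkey_eq p]
    have := (ht_pos p.1).le
    have := (ht_pos p.2).le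
    positivity
  have hkey_sum : Summable key :=
    ((hmul 1 3).add ((hmul 3 1).congr (fun p => mul_comm _ _))).sub ((hmul 2 2).mul_left 2)
  have hkey_pos : 0 < ∑' p, key p := by
    apply Summable.tsum_pos hkey_sum hkey_nn ((0 : ℕ), (1 : ℕ))
    rw [hkey_eq]
    have := ht_pos 0
    have := ht_pos 1
    simp only [Nat.cast_zero, Nat.cast_one]
    nlinarith
  have hkey_tsum : ∑' p, key p = S 1 * S 3 + S 3 * S 1 - 2 * (S 2 * S 2) := by
    rw [hkeydef]
    rw [Summable.tsum_sub ((hmul 1 3).add ((hmul 3 1).congr (fun p => mul_comm _ _)))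
      ((hmul 2 2).mul_left 2)]
    rw [Summable.tsum_add (hmul 1 3) ((hmul 3 1).congr (fun p => mul_comm _ _))]
    rw [tsum_mul_left]
    rw [hprod 1 3, hprod 3 1, hprod 2 2]
    congr 1
    congr 1
    exact tsum_congr (fun p => mul_comm _ _)
  have hmain : S 2 * S 2 < S 3 * S 1 := by nlinarith [hkey_pos, hkey_tsum]
  have hL : Real.log q < 0 := Real.log_neg hq0 hq1
  have hL6 : 0 < Real.log q ^ 6 := by have : Real.log q ≠ 0 := hL.ne; positivity
  have h1 : PsiDeriv q 1 z = Real.log q ^ 2 * S 1 := rfl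
  have h2 : PsiDeriv q 2 z = Real.log q ^ 3 * S 2 := rfl
  have h3 : PsiDeriv q 3 z = Real.log q ^ 4 * S 3 := rfl
  rw [h1, h2, h3]
  calc (Real.log q ^ 3 * S 2) ^ 2 = Real.log q ^ 6 * (S 2 * S 2) := by ring
    _ < Real.log q ^ 6 * (S 3 * S 1) := by exact mul_lt_mul_of_pos_left hmain hL6
    _ = Real.log q ^ 4 * S 3 * (Real.log q ^ 2 * S 1) := by ring
end

section
/- Let $q \in (0,1)$ and $a \in (0,1)$. Define $\kappa_\mathrm{g}(\theta) = \frac{\Psi_q'(\theta - \log_q a)}{\Psi_q'(\theta + \log_q a)}$ for $\theta > \log_q a$, where $\Psi_q'(z) = (\log q)^2\sum_{k=0}^\infty \frac{q^{z+k}}{(1-q^{z+k})^2}$. Then $\theta \mapsto \kappa_\mathrm{g}(\theta)$ is strictly decreasing on $(\log_q a, \infty)$. -/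
/-!
Each summand `z ↦ q ^ z / (1 - q ^ z) ^ 2` of `Ψ'_q` is strictly log-convex on `(0, ∞)`: its
logarithm is `z log q - 2 log (1 - q ^ z)`, and `1 - q ^ z` is log-concave because `q ^ z` is
strictly convex. By Hölder's inequality a convergent sum of strictly log-convex functions is
strictly log-convex, so `F = log Ψ'_q` is strictly convex. With `c = log_q a > 0` and
`θ₁ < θ₂`, the points `θ₂ - c` and `θ₁ + c` lie strictly between `θ₁ - c` and `θ₂ + c` and have
the same sum, so `F (θ₂ - c) + F (θ₁ + c) < F (θ₁ - c) + F (θ₂ + c)`, i.e. `κ(θ₂) < κ(θ₁)`.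
-/

noncomputable def PsiPrime (q z : ℝ) : ℝ :=
  (Real.log q) ^ 2 * ∑' k : ℕ, q ^ (z + (k : ℝ)) / (1 - q ^ (z + (k : ℝ))) ^ 2

open Real Set

section LogConvex

variable {E : Type*} [AddCommMonoid E] [Module ℝ E] {s : Set E}

theorem lt_rpow_mul_rpow_of_strictConvexOn_log {f : E → ℝ}
    (hf : StrictConvexOn ℝ s fun x => log (f x)) (hpos : ∀ x ∈ s, 0 < f x)
    {x y : E} (hx : x ∈ s) (hy : y ∈ s) (hxy : x ≠ y) {l m : ℝ} (hl : 0 < l) (hm : 0 < m)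
    (hlm : l + m = 1) :
    f (l • x + m • y) < f x ^ l * f y ^ m := by
  have hmid := hpos _ (hf.1 hx hy hl.le hm.le hlm)
  rw [← log_lt_log_iff hmid (by have := hpos x hx; have := hpos y hy; positivity),
    log_mul (rpow_pos_of_pos (hpos x hx) l).ne' (rpow_pos_of_pos (hpos y hy) m).ne',
    log_rpow (hpos x hx), log_rpow (hpos y hy)]
  exact hf.2 hx hy hxy hl hm hlm

theorem tsum_rpow_mul_rpow_le {ι : Type*} {a b : ι → ℝ} (ha0 : ∀ i, 0 ≤ a i) (hb0 : ∀ i, 0 ≤ b i)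
    (ha : Summable a) (hb : Summable b) {l m : ℝ} (hl : 0 < l) (hm : 0 < m) (hlm : l + m = 1) :
    (Summable fun i => a i ^ l * b i ^ m) ∧
      ∑' i, a i ^ l * b i ^ m ≤ (∑' i, a i) ^ l * (∑' i, b i) ^ m := by
  have hpow : ∀ {c : ι → ℝ} {r : ℝ}, (∀ i, 0 ≤ c i) → 0 < r → (fun i => (c i ^ r) ^ r⁻¹) = c :=
    fun hc hr => funext fun i => rpow_rpow_inv (hc i) hr.ne'
  have := summable_and_inner_le_Lp_mul_Lq_tsum_of_nonneg (HolderConjugate.inv_inv hl hm hlm)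
    (fun i => rpow_nonneg (ha0 i) l) (fun i => rpow_nonneg (hb0 i) m)
    (by rwa [hpow ha0 hl]) (by rwa [hpow hb0 hm])
  rwa [hpow ha0 hl, hpow hb0 hm, one_div, one_div, inv_inv, inv_inv] at this

theorem strictConvexOn_log_tsum {ι : Type*} [Nonempty ι] {f : ι → E → ℝ}
    (hf : ∀ i, StrictConvexOn ℝ s fun x => log (f i x)) (hpos : ∀ i, ∀ x ∈ s, 0 < f i x)
    (hsum : ∀ x ∈ s, Summable fun i => f i x) :
    StrictConvexOn ℝ s fun x => log (∑' i, f i x) := by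
  obtain ⟨i₀⟩ := ‹Nonempty ι›
  have htsum_pos : ∀ x ∈ s, 0 < ∑' i, f i x := fun x hx =>
    (hsum x hx).tsum_pos (fun i => (hpos i x hx).le) i₀ (hpos i₀ x hx)
  refine ⟨(hf i₀).1, fun x hx y hy hxy l m hl hm hlm => ?_⟩
  have hmid := (hf i₀).1 hx hy hl.le hm.le hlm
  have hterm i := lt_rpow_mul_rpow_of_strictConvexOn_log (hf i) (hpos i) hx hy hxy hl hm hlm
  obtain ⟨hsum_mean, hholder⟩ := tsum_rpow_mul_rpow_le (fun i => (hpos i x hx).le)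
    (fun i => (hpos i y hy).le) (hsum x hx) (hsum y hy) hl hm hlm
  have hlt : ∑' i, f i (l • x + m • y) < (∑' i, f i x) ^ l * (∑' i, f i y) ^ m :=
    ((hsum _ hmid).tsum_lt_tsum (fun i => (hterm i).le) (hterm i₀) hsum_mean).trans_le hholder
  have hx₀ := htsum_pos x hx
  have hy₀ := htsum_pos y hy
  rw [← log_lt_log_iff (htsum_pos _ hmid) (by positivity)] at hlt
  rwa [log_mul (rpow_pos_of_pos hx₀ l).ne' (rpow_pos_of_pos hy₀ m).ne', log_rpow hx₀,
    log_rpow hy₀] at hlt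

end LogConvex

theorem StrictConvexOn.strictAntiOn_sub_comp_add {s : Set ℝ} {F : ℝ → ℝ}
    (hF : StrictConvexOn ℝ s F) {c : ℝ} (hc : 0 < c) :
    StrictAntiOn (fun θ => F (θ - c) - F (θ + c)) {θ | θ - c ∈ s ∧ θ + c ∈ s} := by
  rintro θ₁ ⟨h₁, -⟩ θ₂ ⟨-, h₂⟩ h
  have hd : 0 < θ₂ - θ₁ + 2 * c := by linarith
  set l := 2 * c / (θ₂ - θ₁ + 2 * c)
  set m := (θ₂ - θ₁) / (θ₂ - θ₁ + 2 * c)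
  have hl : 0 < l := by positivity
  have hm : 0 < m := div_pos (by linarith) hd
  have hlm : l + m = 1 := by rw [← add_div, div_eq_one_iff_eq hd.ne']; ring
  have hne : θ₁ - c ≠ θ₂ + c := by linarith
  have h₃ := hF.2 h₁ h₂ hne hl hm hlm
  have h₄ := hF.2 h₁ h₂ hne hm hl (by linarith)
  rw [show l • (θ₁ - c) + m • (θ₂ + c) = θ₂ - c by simp only [l, m, smul_eq_mul]; field_simp; ring]
    at h₃
  rw [show m • (θ₁ - c) + l • (θ₂ + c) = θ₁ + c by simp only [l, m, smul_eq_mul]; field_simp; ring]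
    at h₄
  simp only [smul_eq_mul] at h₃ h₄
  linear_combination h₃ + h₄ + (F (θ₁ - c) + F (θ₂ + c)) * hlm

section PsiPrime

variable {q : ℝ}

theorem strictConvexOn_rpow_left (hq0 : 0 < q) (hq1 : q ≠ 1) :
    StrictConvexOn ℝ univ fun z : ℝ => q ^ z := by
  refine ⟨convex_univ, fun x _ y _ hxy l m hl hm hlm => ?_⟩
  have hL : log q ≠ 0 := log_ne_zero_of_pos_of_ne_one hq0 hq1
  have := strictConvexOn_exp.2 (mem_univ (log q * x)) (mem_univ (log q * y))
    (by simpa [hL] using hxy) hl hm hlm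
  simp only [rpow_def_of_pos hq0, smul_eq_mul] at this ⊢
  rwa [show log q * (l * x + m * y) = l * (log q * x) + m * (log q * y) by ring]

theorem strictConcaveOn_log_one_sub_rpow (hq0 : 0 < q) (hq1 : q < 1) :
    StrictConcaveOn ℝ (Ioi 0) fun z : ℝ => log (1 - q ^ z) := by
  have hpos : ∀ z : ℝ, 0 < z → 0 < 1 - q ^ z := fun z hz => sub_pos.2 (rpow_lt_one hq0.le hq1 hz)
  refine ⟨convex_Ioi 0, fun x (hx : 0 < x) y (hy : 0 < y) hxy l m hl hm hlm => ?_⟩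
  have hrpow := (strictConvexOn_rpow_left hq0 hq1.ne).2 (mem_univ x) (mem_univ y) hxy hl hm hlm
  simp only [smul_eq_mul] at hrpow ⊢
  calc l * log (1 - q ^ x) + m * log (1 - q ^ y)
      ≤ log (l * (1 - q ^ x) + m * (1 - q ^ y)) :=
        strictConcaveOn_log_Ioi.concaveOn.2 (hpos x hx) (hpos y hy) hl.le hm.le hlm
    _ < log (1 - q ^ (l * x + m * y)) := by
        refine log_lt_log (by have := hpos x hx; have := hpos y hy; positivity) ?_
        linear_combination hrpow + hlm

theorem strictConvexOn_log_rpow_div_one_sub_rpow_sq (hq0 : 0 < q) (hq1 : q < 1) :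
    StrictConvexOn ℝ (Ioi 0) fun z : ℝ => log (q ^ z / (1 - q ^ z) ^ 2) := by
  have hlog : ∀ z : ℝ, 0 < z → log (q ^ z / (1 - q ^ z) ^ 2) = log q * z - 2 * log (1 - q ^ z) :=
    fun z hz => by
      rw [log_div (rpow_pos_of_pos hq0 z).ne'
        (pow_pos (sub_pos.2 (rpow_lt_one hq0.le hq1 hz)) 2).ne', log_rpow hq0, log_pow]
      push_cast
      ring
  refine ⟨convex_Ioi 0, fun x (hx : 0 < x) y (hy : 0 < y) hxy l m hl hm hlm => ?_⟩
  have hconc := (strictConcaveOn_log_one_sub_rpow hq0 hq1).2 hx hy hxy hl hm hlm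
  simp only [smul_eq_mul] at hconc ⊢
  rw [hlog x hx, hlog y hy, hlog _ (by positivity)]
  linear_combination 2 * hconc

theorem rpow_div_one_sub_rpow_sq_pos (hq0 : 0 < q) (hq1 : q < 1) {z : ℝ} (hz : 0 < z) :
    0 < q ^ z / (1 - q ^ z) ^ 2 := by
  have := rpow_pos_of_pos hq0 z
  have := sub_pos.2 (rpow_lt_one hq0.le hq1 hz)
  positivity

theorem summable_rpow_add_div_one_sub_rpow_add_sq (hq0 : 0 < q) (hq1 : q < 1) {z : ℝ}
    (hz : 0 < z) : Summable fun k : ℕ => q ^ (z + k) / (1 - q ^ (z + k)) ^ 2 := by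
  refine .of_nonneg_of_le (fun k => ?_) (fun k => ?_)
    ((summable_geometric_of_lt_one hq0.le hq1).mul_left (q ^ z / (1 - q ^ z) ^ 2))
  · exact (rpow_div_one_sub_rpow_sq_pos hq0 hq1 (by positivity)).le
  · have hzk : q ^ (z + k) ≤ q ^ z := rpow_le_rpow_of_exponent_ge hq0 hq1.le (by simp)
    have hz1 : 0 < 1 - q ^ z := sub_pos.2 (rpow_lt_one hq0.le hq1 hz)
    calc q ^ (z + k) / (1 - q ^ (z + k)) ^ 2 ≤ q ^ (z + k) / (1 - q ^ z) ^ 2 := by gcongr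
      _ = q ^ z / (1 - q ^ z) ^ 2 * q ^ k := by rw [rpow_add hq0, rpow_natCast]; ring

theorem psiPrime_pos (hq0 : 0 < q) (hq1 : q < 1) {z : ℝ} (hz : 0 < z) : 0 < PsiPrime q z := by
  have hterm (k : ℕ) := rpow_div_one_sub_rpow_sq_pos hq0 hq1 (by positivity : 0 < z + k)
  exact mul_pos (sq_pos_of_neg (log_neg hq0 hq1))
    ((summable_rpow_add_div_one_sub_rpow_add_sq hq0 hq1 hz).tsum_pos (fun k => (hterm k).le) 0
      (hterm 0))

theorem strictConvexOn_log_psiPrime (hq0 : 0 < q) (hq1 : q < 1) :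
    StrictConvexOn ℝ (Ioi 0) fun z => log (PsiPrime q z) := by
  have hterm (k : ℕ) : StrictConvexOn ℝ (Ioi 0) fun z : ℝ =>
      log (q ^ (z + k) / (1 - q ^ (z + k)) ^ 2) :=
    (((strictConvexOn_log_rpow_div_one_sub_rpow_sq hq0 hq1).translate_right (k : ℝ)).subset
      (fun z (hz : 0 < z) => show 0 < (k : ℝ) + z by positivity) (convex_Ioi 0)).congr
      fun z _ => by simp only [Function.comp_apply, add_comm (k : ℝ)]
  have hS := strictConvexOn_log_tsum hterm
    (fun k z (hz : 0 < z) => rpow_div_one_sub_rpow_sq_pos hq0 hq1 (by positivity))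
    (fun z hz => summable_rpow_add_div_one_sub_rpow_add_sq hq0 hq1 hz)
  refine (hS.add_const (log (log q ^ 2))).congr fun z (hz : 0 < z) => ?_
  have hprod := (psiPrime_pos hq0 hq1 hz).ne'
  simp only [Pi.add_apply, PsiPrime] at hprod ⊢
  rw [log_mul (left_ne_zero_of_mul hprod) (right_ne_zero_of_mul hprod), add_comm]

end PsiPrime

theorem stmt_9 (q a : ℝ) (hq0 : 0 < q) (hq1 : q < 1) (ha0 : 0 < a) (ha1 : a < 1) :
    StrictAntiOn (fun θ : ℝ =>
      PsiPrime q (θ - Real.log a / Real.log q) / PsiPrime q (θ + Real.log a / Real.log q))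
      (Set.Ioi (Real.log a / Real.log q)) := by
  set c := log a / log q
  have hc : 0 < c := div_pos_of_neg_of_neg (log_neg ha0 ha1) (log_neg hq0 hq1)
  have hmem : ∀ θ ∈ Ioi c, θ - c ∈ Ioi 0 ∧ θ + c ∈ Ioi 0 := fun θ (hθ : c < θ) =>
    ⟨sub_pos.2 hθ, by simp only [mem_Ioi]; linarith⟩
  have hratio : ∀ θ ∈ Ioi c, exp (log (PsiPrime q (θ - c)) - log (PsiPrime q (θ + c))) =
      PsiPrime q (θ - c) / PsiPrime q (θ + c) := fun θ hθ => by
    rw [exp_sub, exp_log (psiPrime_pos hq0 hq1 (hmem θ hθ).1),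
      exp_log (psiPrime_pos hq0 hq1 (hmem θ hθ).2)]
  intro θ₁ h₁ θ₂ h₂ h
  simp only [← hratio θ₁ h₁, ← hratio θ₂ h₂, exp_lt_exp]
  exact (strictConvexOn_log_psiPrime hq0 hq1).strictAntiOn_sub_comp_add hc (hmem θ₁ h₁)
    (hmem θ₂ h₂) h
end

section
/- Let $q \in (0,1)$. The function $z \mapsto \Psi_q''(z)/\Psi_q'(z)$ is strictly increasing on $(0,\infty)$ and converges to $\log q$ as $z \to \infty$. Consequently $\Psi_q''(z)/\Psi_q'(z) < \log q$ for all $z > 0$. -/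
noncomputable def Psi1 (q z : ℝ) : ℝ :=
  (Real.log q) ^ 2 * ∑' n : ℕ, ((n : ℝ) + 1) * q ^ (((n : ℝ) + 1) * z) / (1 - q ^ (n + 1))

noncomputable def Psi2 (q z : ℝ) : ℝ :=
  (Real.log q) ^ 3 * ∑' n : ℕ, ((n : ℝ) + 1) ^ 2 * q ^ (((n : ℝ) + 1) * z) / (1 - q ^ (n + 1))

/-! Put `x = q ^ z ∈ (0, 1)` and `a n = (1 - q ^ (n + 1))⁻¹`. Then `Psi2 q z / Psi1 q z` is
`log q` times `M₂(x) / M₁(x)`, where `M_k(x) = ∑ (n + 1) ^ k a n x ^ n`: the mean of `n + 1` under the weights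
`(n + 1) a n x ^ n`, which shift towards large `n` as `x` grows. Symmetrising the double series of
`M₂(y) M₁(x) - M₂(x) M₁(y)` over `(m, n) ↔ (n, m)` gives the nonnegative terms
`(m + 1) (n + 1) a m a n (m - n) (y ^ m x ^ n - x ^ m y ^ n)`, so `M₂ / M₁` is strictly increasing
on `(0, 1)`, and since `log q < 0` the ratio is strictly increasing in `z`. As `z → ∞`, `x → 0` and
both `M_k(x) → a 0` by dominated convergence, so the ratio tends to `log q`; the strict bound then
follows from monotonicity. -/

open Filter Topology Set

lemma summable_succ_pow_mul_geometric {R : Type*} [NormedCommRing R] [HasSummableGeomSeries R]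
    (k : ℕ) {r : R} (hr : ‖r‖ < 1) :
    Summable (fun n : ℕ => ((n : R) + 1) ^ k * r ^ n) := by
  simp_rw [add_pow, one_pow, mul_one, Finset.sum_mul]
  refine summable_sum fun i _ => ?_
  simpa [mul_assoc, mul_comm, mul_left_comm] using
    (summable_pow_mul_geometric_of_norm_lt_one i hr).mul_left (k.choose i : R)

lemma tsum_pos_of_add_swap_pos {β : Type*} {F : β × β → ℝ} (hF : Summable F)
    (h_nonneg : ∀ p, 0 ≤ F p + F p.swap) {p₀ : β × β} (h_pos : 0 < F p₀ + F p₀.swap) :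
    0 < ∑' p, F p := by
  have h_sum_swap : ∑' p : β × β, F p.swap = ∑' p, F p := (Equiv.prodComm β β).tsum_eq F
  have h_sym : 0 < ∑' p : β × β, (F p + F p.swap) :=
    (hF.add hF.prod_symm).tsum_pos h_nonneg p₀ h_pos
  rw [hF.tsum_add hF.prod_symm, h_sum_swap] at h_sym
  linarith

lemma sub_mul_pow_sub_pow_nonneg {x y : ℝ} (hx : 0 ≤ x) (hxy : x ≤ y) (m n : ℕ) :
    0 ≤ ((m : ℝ) - n) * (y ^ m * x ^ n - x ^ m * y ^ n) := by
  have h_le {m n : ℕ} (h : n ≤ m) : x ^ m * y ^ n ≤ y ^ m * x ^ n := by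
    obtain ⟨d, rfl⟩ := Nat.exists_eq_add_of_le h
    rw [pow_add, pow_add]
    have := pow_le_pow_left₀ hx hxy d
    nlinarith [mul_nonneg (pow_nonneg hx n) (pow_nonneg (hx.trans hxy) n)]
  rcases le_total n m with h | h
  · exact mul_nonneg (sub_nonneg.2 (by exact_mod_cast h)) (sub_nonneg.2 (h_le h))
  · exact mul_nonneg_of_nonpos_of_nonpos (sub_nonpos.2 (by exact_mod_cast h))
      (by linarith [h_le h, mul_comm (x ^ n) (y ^ m), mul_comm (y ^ n) (x ^ m)])

noncomputable def momentSeries (a : ℕ → ℝ) (k : ℕ) (x : ℝ) : ℝ :=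
  ∑' n : ℕ, ((n : ℝ) + 1) ^ k * a n * x ^ n

section momentSeries

variable {a : ℕ → ℝ} {C x y : ℝ}

lemma summable_momentSeries (ha : ∀ n, |a n| ≤ C) (hx : |x| < 1) (k : ℕ) :
    Summable (fun n : ℕ => ((n : ℝ) + 1) ^ k * a n * x ^ n) := by
  have hx' : ‖|x|‖ < 1 := by rwa [Real.norm_eq_abs, abs_abs]
  refine .of_norm_bounded ((summable_succ_pow_mul_geometric k hx').mul_left C) fun n => ?_
  rw [Real.norm_eq_abs, abs_mul, abs_mul, abs_pow, abs_pow,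
    abs_of_nonneg (by positivity : (0 : ℝ) ≤ n + 1)]
  have := ha n
  calc _ = |a n| * (((n : ℝ) + 1) ^ k * |x| ^ n) := by ring
    _ ≤ C * (((n : ℝ) + 1) ^ k * |x| ^ n) := by gcongr

lemma momentSeries_pos (ha : ∀ n, 0 < a n) (hC : ∀ n, a n ≤ C) (hx₀ : 0 < x) (hx₁ : x < 1)
    (k : ℕ) : 0 < momentSeries a k x :=
  (summable_momentSeries (fun n => (abs_of_pos (ha n)).trans_le (hC n))
    (by rwa [abs_of_pos hx₀]) k).tsum_pos (fun n => by have := ha n; positivity) 0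
    (by simpa using ha 0)

lemma tendsto_momentSeries_zero (ha : ∀ n, |a n| ≤ C) (k : ℕ) :
    Tendsto (momentSeries a k) (𝓝 0) (𝓝 (a 0)) := by
  have h_lim : ∑' n : ℕ, ((n : ℝ) + 1) ^ k * a n * 0 ^ n = a 0 := by
    rw [tsum_eq_single 0 fun n hn => by simp [hn]]
    simp
  have hC : 0 ≤ C := (abs_nonneg _).trans (ha 0)
  rw [← h_lim]
  refine tendsto_tsum_of_dominated_convergence
    (summable_momentSeries (a := fun _ => C) (fun _ => (abs_of_nonneg hC).le) (x := 1 / 2)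
      (by norm_num) k)
    (fun n => ((continuous_pow n).const_mul _).tendsto 0) ?_
  filter_upwards [Metric.closedBall_mem_nhds (0 : ℝ) (by norm_num : (0 : ℝ) < 1 / 2)] with x hx n
  rw [mem_closedBall_zero_iff, Real.norm_eq_abs] at hx
  rw [Real.norm_eq_abs, abs_mul, abs_mul, abs_pow, abs_pow,
    abs_of_nonneg (by positivity : (0 : ℝ) ≤ n + 1)]
  gcongr
  exact ha n

lemma momentSeries_mul_lt_mul (ha : ∀ n, 0 < a n) (hC : ∀ n, a n ≤ C) (hx : 0 < x)
    (hxy : x < y) (hy : y < 1) :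
    momentSeries a 2 x * momentSeries a 1 y < momentSeries a 2 y * momentSeries a 1 x := by
  set t : ℕ → ℝ → ℕ → ℝ := fun k x n => ((n : ℝ) + 1) ^ k * a n * x ^ n with ht
  have h_summable (k : ℕ) {x : ℝ} (hx : 0 < x) (hx₁ : x < 1) : Summable (t k x) :=
    summable_momentSeries (fun n => (abs_of_pos (ha n)).trans_le (hC n)) (by rwa [abs_of_pos hx]) k
  have h_nonneg (k : ℕ) {x : ℝ} (hx : 0 < x) (n : ℕ) : 0 ≤ t k x n := by
    have := ha n; positivity
  have hy₀ := hx.trans hxy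
  have hx₁ := hxy.trans hy
  have hyx := (h_summable 2 hy₀ hy).mul_of_nonneg (h_summable 1 hx hx₁)
    (h_nonneg 2 hy₀) (h_nonneg 1 hx)
  have hxy' := (h_summable 2 hx hx₁).mul_of_nonneg (h_summable 1 hy₀ hy)
    (h_nonneg 2 hx) (h_nonneg 1 hy₀)
  have h_prod : momentSeries a 2 y * momentSeries a 1 x - momentSeries a 2 x * momentSeries a 1 y
      = ∑' p : ℕ × ℕ, (t 2 y p.1 * t 1 x p.2 - t 2 x p.1 * t 1 y p.2) := by
    rw [hyx.tsum_sub hxy', ← (h_summable 2 hy₀ hy).tsum_mul_tsum (h_summable 1 hx hx₁) hyx,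
      ← (h_summable 2 hx hx₁).tsum_mul_tsum (h_summable 1 hy₀ hy) hxy']
    rfl
  have h_swap (m n : ℕ) :
      (t 2 y m * t 1 x n - t 2 x m * t 1 y n) + (t 2 y n * t 1 x m - t 2 x n * t 1 y m)
        = ((m : ℝ) + 1) * ((n : ℝ) + 1) * a m * a n
            * (((m : ℝ) - n) * (y ^ m * x ^ n - x ^ m * y ^ n)) := by
    simp only [ht]; ring
  suffices 0 < ∑' p : ℕ × ℕ, (t 2 y p.1 * t 1 x p.2 - t 2 x p.1 * t 1 y p.2) by linarith
  refine tsum_pos_of_add_swap_pos (hyx.sub hxy') (fun ⟨m, n⟩ => ?_) (p₀ := (1, 0)) ?_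
  · rw [Prod.swap_prod_mk, h_swap]
    have := ha m; have := ha n
    exact mul_nonneg (by positivity) (sub_mul_pow_sub_pow_nonneg hx.le hxy.le m n)
  · rw [Prod.swap_prod_mk, h_swap]
    have := ha 0; have := ha 1
    exact mul_pos (by positivity) (by simpa using hxy)

lemma strictMonoOn_momentSeries_div (ha : ∀ n, 0 < a n) (hC : ∀ n, a n ≤ C) :
    StrictMonoOn (fun x => momentSeries a 2 x / momentSeries a 1 x) (Ioo 0 1) := by
  intro x hx y hy hxy
  rw [div_lt_div_iff₀ (momentSeries_pos ha hC hx.1 hx.2 1) (momentSeries_pos ha hC hy.1 hy.2 1)]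
  exact momentSeries_mul_lt_mul ha hC hx.1 hxy hy.2

end momentSeries

lemma StrictMonoOn.lt_of_tendsto_atTop {α β : Type*} [LinearOrder α] [NoMaxOrder α]
    [LinearOrder β] [TopologicalSpace β] [OrderClosedTopology β] {f : α → β} {a : α} {l : β}
    (hf : StrictMonoOn f (Ioi a)) (hl : Tendsto f atTop (𝓝 l)) {z : α} (hz : a < z) :
    f z < l := by
  have : Nonempty α := ⟨z⟩
  obtain ⟨w, hzw⟩ := exists_gt z
  refine (hf hz (hz.trans hzw) hzw).trans_le (ge_of_tendsto hl ?_)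
  filter_upwards [eventually_ge_atTop w] with v hv
  exact hf.monotoneOn (hz.trans hzw) (hz.trans (hzw.trans_le hv)) hv

noncomputable def qWeight (q : ℝ) (n : ℕ) : ℝ := (1 - q ^ (n + 1))⁻¹

section qWeight

variable {q : ℝ}

lemma qWeight_pos (hq₀ : 0 < q) (hq₁ : q < 1) (n : ℕ) : 0 < qWeight q n :=
  inv_pos.2 (sub_pos.2 (pow_lt_one₀ hq₀.le hq₁ n.succ_ne_zero))

lemma qWeight_le (hq₀ : 0 < q) (hq₁ : q < 1) (n : ℕ) : qWeight q n ≤ (1 - q)⁻¹ :=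
  inv_anti₀ (sub_pos.2 hq₁) (sub_le_sub_left (pow_le_of_le_one hq₀.le hq₁.le n.succ_ne_zero) 1)

lemma abs_qWeight_le (hq₀ : 0 < q) (hq₁ : q < 1) (n : ℕ) : |qWeight q n| ≤ (1 - q)⁻¹ :=
  (abs_of_pos (qWeight_pos hq₀ hq₁ n)).trans_le (qWeight_le hq₀ hq₁ n)

end qWeight

section Psi

variable {q : ℝ}

lemma tsum_succ_pow_mul_rpow_div (hq : 0 < q) (k : ℕ) (z : ℝ) :
    ∑' n : ℕ, ((n : ℝ) + 1) ^ k * q ^ (((n : ℝ) + 1) * z) / (1 - q ^ (n + 1))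
      = q ^ z * momentSeries (qWeight q) k (q ^ z) := by
  rw [momentSeries, ← tsum_mul_left]
  congr 1 with n
  rw [mul_comm _ z, Real.rpow_mul hq.le, show (n : ℝ) + 1 = ((n + 1 : ℕ) : ℝ) by push_cast; ring,
    Real.rpow_natCast, pow_succ, qWeight]
  ring

lemma Psi2_div_Psi1 (hq₀ : 0 < q) (hq₁ : q < 1) (z : ℝ) :
    Psi2 q z / Psi1 q z
      = Real.log q * (momentSeries (qWeight q) 2 (q ^ z) / momentSeries (qWeight q) 1 (q ^ z)) := by
  have hlog : Real.log q ≠ 0 := (Real.log_neg hq₀ hq₁).ne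
  have hx : q ^ z ≠ 0 := (Real.rpow_pos_of_pos hq₀ z).ne'
  have h1 : Psi1 q z = Real.log q ^ 2 * (q ^ z * momentSeries (qWeight q) 1 (q ^ z)) := by
    simpa only [Psi1, pow_one] using
      congrArg (Real.log q ^ 2 * ·) (tsum_succ_pow_mul_rpow_div hq₀ 1 z)
  have h2 : Psi2 q z = Real.log q ^ 3 * (q ^ z * momentSeries (qWeight q) 2 (q ^ z)) :=
    congrArg (Real.log q ^ 3 * ·) (tsum_succ_pow_mul_rpow_div hq₀ 2 z)
  set M := momentSeries (qWeight q)
  rw [h1, h2, show Real.log q ^ 3 * (q ^ z * M 2 (q ^ z))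
      = Real.log q ^ 2 * q ^ z * (Real.log q * M 2 (q ^ z)) by ring,
    show Real.log q ^ 2 * (q ^ z * M 1 (q ^ z)) = Real.log q ^ 2 * q ^ z * M 1 (q ^ z) by ring,
    mul_div_mul_left _ _ (mul_ne_zero (pow_ne_zero 2 hlog) hx), mul_div_assoc]

lemma strictMonoOn_Psi2_div_Psi1 (hq₀ : 0 < q) (hq₁ : q < 1) :
    StrictMonoOn (fun z => Psi2 q z / Psi1 q z) (Ioi 0) := by
  intro z₁ hz₁ z₂ hz₂ h
  simp only [Psi2_div_Psi1 hq₀ hq₁]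
  have h_mem {z : ℝ} (hz : z ∈ Ioi 0) : q ^ z ∈ Ioo 0 1 :=
    ⟨Real.rpow_pos_of_pos hq₀ z, Real.rpow_lt_one hq₀.le hq₁ hz⟩
  refine mul_lt_mul_of_neg_left ?_ (Real.log_neg hq₀ hq₁)
  exact strictMonoOn_momentSeries_div (qWeight_pos hq₀ hq₁) (qWeight_le hq₀ hq₁)
    (h_mem hz₂) (h_mem hz₁) (Real.rpow_lt_rpow_of_exponent_gt hq₀ hq₁ h)

lemma tendsto_Psi2_div_Psi1 (hq₀ : 0 < q) (hq₁ : q < 1) :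
    Tendsto (fun z => Psi2 q z / Psi1 q z) atTop (𝓝 (Real.log q)) := by
  simp only [Psi2_div_Psi1 hq₀ hq₁]
  have h_ratio := (tendsto_momentSeries_zero (abs_qWeight_le hq₀ hq₁) 2).div
    (tendsto_momentSeries_zero (abs_qWeight_le hq₀ hq₁) 1) (qWeight_pos hq₀ hq₁ 0).ne'
  rw [div_self (qWeight_pos hq₀ hq₁ 0).ne'] at h_ratio
  simpa using (h_ratio.comp (tendsto_rpow_atTop_of_base_lt_one q (by linarith) hq₁)).const_mul
    (Real.log q)

end Psi

theorem stmt_12 (q : ℝ) (hq0 : 0 < q) (hq1 : q < 1) :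
    StrictMonoOn (fun z => Psi2 q z / Psi1 q z) (Set.Ioi (0 : ℝ)) ∧
    Filter.Tendsto (fun z => Psi2 q z / Psi1 q z) Filter.atTop (nhds (Real.log q)) ∧
    ∀ z : ℝ, 0 < z → Psi2 q z / Psi1 q z < Real.log q :=
  ⟨strictMonoOn_Psi2_div_Psi1 hq0 hq1, tendsto_Psi2_div_Psi1 hq0 hq1, fun _ hz =>
    (strictMonoOn_Psi2_div_Psi1 hq0 hq1).lt_of_tendsto_atTop (tendsto_Psi2_div_Psi1 hq0 hq1) hz⟩
end

section
/- Let $q \in (0,1)$, $R, L \ge 0$ not both zero, and $\theta > 0$. Define $\kappa_\mathrm{a} = \frac{\Psi_q'(\theta)}{(\log q)^2 (Rq^\theta + Lq^{-\theta})}$ and $\chi_\mathrm{a} = \frac{1}{2}\left(\kappa_\mathrm{a}(\log q)^3(Rq^\theta - Lq^{-\theta}) - \Psi_q''(\theta)\right)$. Then $\chi_\mathrm{a} > 0$. -/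
theorem stmt_13 (q R L θ : ℝ) (hq0 : 0 < q) (hq1 : q < 1)
    (hR : 0 ≤ R) (hL : 0 ≤ L) (hRL : ¬(R = 0 ∧ L = 0)) (hθ : 0 < θ) :
    0 < (1 / 2) *
      ((Psi1 q θ / ((Real.log q) ^ 2 * (R * q ^ θ + L * q ^ (-θ)))) *
          (Real.log q) ^ 3 * (R * q ^ θ - L * q ^ (-θ)) - Psi2 q θ) := by
  have hc : Real.log q < 0 := Real.log_neg hq0 hq1
  have hc2 : (0:ℝ) < (Real.log q) ^ 2 := by nlinarith [mul_pos_of_neg_of_neg hc hc]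
  have hc3 : (Real.log q) ^ 3 < 0 := by nlinarith [mul_neg_of_pos_of_neg hc2 hc]
  have hr : (0:ℝ) < q ^ θ := Real.rpow_pos_of_pos hq0 θ
  have hr1 : q ^ θ < 1 := Real.rpow_lt_one hq0.le hq1 hθ
  have hrn : (0:ℝ) < q ^ (-θ) := Real.rpow_pos_of_pos hq0 _
  have hD : 0 < R * q ^ θ + L * q ^ (-θ) := by
    rcases lt_or_eq_of_le hR with hR' | hR'
    · positivity
    · rcases lt_or_eq_of_le hL with hL' | hL'
      · positivity
      · exact absurd ⟨hR'.symm, hL'.symm⟩ hRL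
  set D := R * q ^ θ + L * q ^ (-θ) with hDdef
  set x := R * q ^ θ - L * q ^ (-θ) with hxdef
  have hxD : x ≤ D := by
    have : 0 ≤ L * q ^ (-θ) := by positivity
    simp only [hxdef, hDdef]; linarith
  have hqn : ∀ n : ℕ, 0 < 1 - q ^ (n + 1) := by
    intro n
    have : q ^ (n + 1) < 1 := pow_lt_one₀ hq0.le hq1 (Nat.succ_ne_zero n)
    linarith
  have hterm : ∀ n : ℕ, q ^ (((n : ℝ) + 1) * θ) = (q ^ θ) ^ (n + 1) := by
    intro n
    rw [mul_comm, Real.rpow_mul hq0.le]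
    rw [show ((n:ℝ) + 1) = ((n + 1 : ℕ) : ℝ) by push_cast; ring, Real.rpow_natCast]
  set f1 : ℕ → ℝ := fun n => ((n : ℝ) + 1) * q ^ (((n : ℝ) + 1) * θ) / (1 - q ^ (n + 1)) with hf1
  set f2 : ℕ → ℝ := fun n => ((n : ℝ) + 1) ^ 2 * q ^ (((n : ℝ) + 1) * θ) / (1 - q ^ (n + 1)) with hf2
  have hf1pos : ∀ n, 0 < f1 n := by
    intro n
    have h2 := hqn n
    have h1 : (0:ℝ) < q ^ (((n:ℝ)+1)*θ) := Real.rpow_pos_of_pos hq0 _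
    positivity
  have hf2pos : ∀ n, 0 < f2 n := by
    intro n
    have h2 := hqn n
    have h1 : (0:ℝ) < q ^ (((n:ℝ)+1)*θ) := Real.rpow_pos_of_pos hq0 _
    positivity
  have hle : ∀ n, f1 n ≤ f2 n := by
    intro n
    have h2 := hqn n
    have h1 : (0:ℝ) ≤ q ^ (((n:ℝ)+1)*θ) := (Real.rpow_pos_of_pos hq0 _).le
    simp only [hf1, hf2]
    gcongr
    nlinarith [Nat.cast_nonneg (α := ℝ) n]
  have hg0 : Summable (fun n : ℕ => (n:ℝ)^2 * (q^θ)^n) :=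
    summable_pow_mul_geometric_of_norm_lt_one 2
      (by rw [Real.norm_eq_abs, abs_of_pos hr]; exact hr1)
  have hg1 : Summable (fun n : ℕ => ((n:ℝ)+1)^2 * (q^θ)^(n+1)) := by
    have h := (summable_nat_add_iff (f := fun n : ℕ => (n:ℝ)^2 * (q^θ)^n) 1).mpr hg0
    apply h.congr
    intro n
    push_cast
    ring
  have hsum2 : Summable f2 := by
    apply Summable.of_nonneg_of_le (fun n => (hf2pos n).le) ?_ (hg1.div_const (1 - q))
    intro n
    simp only [hf2]
    rw [hterm n]
    have h2 := hqn n
    have hq1n : q ^ (n+1) ≤ q := by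
      calc q ^ (n+1) ≤ q ^ 1 := pow_le_pow_of_le_one hq0.le hq1.le (Nat.le_add_left 1 n)
      _ = q := pow_one q
    have hd : (0:ℝ) < 1 - q := by linarith
    gcongr
  have hsum1 : Summable f1 := Summable.of_nonneg_of_le (fun n => (hf1pos n).le) hle hsum2
  set S1 := ∑' n, f1 n with hS1
  set S2 := ∑' n, f2 n with hS2
  have hS1pos : 0 < S1 := Summable.tsum_pos hsum1 (fun n => (hf1pos n).le) 0 (hf1pos 0)
  have hS12 : S1 < S2 := by
    apply Summable.tsum_lt_tsum (i := 1) hle ?_ hsum1 hsum2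
    simp only [hf1, hf2]
    have h1 : (0:ℝ) < q ^ ((((1:ℕ):ℝ)+1)*θ) := Real.rpow_pos_of_pos hq0 _
    have h2 := hqn 1
    push_cast at h1 ⊢
    rw [div_lt_div_iff₀ h2 h2]
    nlinarith
  have hPsi1 : Psi1 q θ = (Real.log q) ^ 2 * S1 := rfl
  have hPsi2 : Psi2 q θ = (Real.log q) ^ 3 * S2 := rfl
  have hfrac : Psi1 q θ / ((Real.log q) ^ 2 * D) = S1 / D := by
    rw [hPsi1, mul_div_mul_left _ _ (ne_of_gt hc2)]
  rw [hfrac, hPsi2]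
  have h1 : S1 / D * x ≤ S1 / D * D :=
    mul_le_mul_of_nonneg_left hxD (by positivity)
  have h2 : S1 / D * D = S1 := div_mul_cancel₀ S1 hD.ne'
  have hkey : S1 / D * x - S2 < 0 := by linarith
  nlinarith [mul_pos_of_neg_of_neg hc3 hkey]
end

section
/- Let $q \in (0,1)$, $a \in (0,1)$, $\theta > \log_q a$. Define $\chi_\mathrm{g} = \frac{1}{2}\left(\kappa_\mathrm{g}\Psi_q''(\theta + \log_q a) - \Psi_q''(\theta - \log_q a)\right)$ where $\kappa_\mathrm{g} = \Psi_q'(\theta - \log_q a)/\Psi_q'(\theta + \log_q a)$. Then $\chi_\mathrm{g} > 0$. -/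
private lemma aux_summable {q x : ℝ} (hq0 : 0 < q) (hq1 : q < 1) (hx0 : 0 ≤ x) (hx1 : x < 1)
    (m : ℕ) : Summable (fun n : ℕ => ((n : ℝ) + 1) ^ m * x ^ (n + 1) / (1 - q ^ (n + 1))) := by
  have hd : ∀ n : ℕ, 0 < 1 - q ^ (n + 1) := fun n => by
    have : q ^ (n + 1) < 1 := pow_lt_one₀ hq0.le hq1 n.succ_ne_zero
    linarith
  have hq : (0:ℝ) < 1 - q := by linarith
  have hS : Summable (fun n : ℕ => (n : ℝ) ^ m * x ^ n) := by
    have := summable_pow_mul_geometric_of_norm_lt_one (R := ℝ) m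
      (r := x) (by rwa [Real.norm_eq_abs, abs_of_nonneg hx0])
    exact this
  have hS2 : Summable (fun n : ℕ => ((n : ℝ) + 1) ^ m * x ^ (n + 1)) := by
    have := (summable_nat_add_iff 1).2 hS
    refine this.congr fun n => ?_
    push_cast
    ring
  refine Summable.of_nonneg_of_le (fun n => ?_) (fun n => ?_) (hS2.mul_left (1 - q)⁻¹)
  · have := hd n
    positivity
  · rw [div_le_iff₀ (hd n)]
    have h2 : (1 - q)⁻¹ * (1 - q) ≤ (1 - q)⁻¹ * (1 - q ^ (n+1)) := by
      have h1 : q ^ (n + 1) ≤ q := by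
        calc q ^ (n + 1) ≤ q ^ 1 := pow_le_pow_of_le_one hq0.le hq1.le (by omega)
        _ = q := pow_one q
      have := inv_pos.2 hq
      nlinarith
    rw [inv_mul_cancel₀ hq.ne'] at h2
    calc ((n : ℝ) + 1) ^ m * x ^ (n + 1)
        = ((n : ℝ) + 1) ^ m * x ^ (n + 1) * 1 := by ring
      _ ≤ ((n : ℝ) + 1) ^ m * x ^ (n + 1) * ((1 - q)⁻¹ * (1 - q ^ (n+1))) := by
          have : (0:ℝ) ≤ ((n : ℝ) + 1) ^ m * x ^ (n + 1) := by positivity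
          nlinarith
      _ = (1 - q)⁻¹ * (((n : ℝ) + 1) ^ m * x ^ (n + 1)) * (1 - q ^ (n+1)) := by ring

private lemma aux_pos {q x : ℝ} (hq0 : 0 < q) (hq1 : q < 1) (hx0 : 0 < x) (hx1 : x < 1)
    (m : ℕ) : 0 < ∑' n : ℕ, ((n : ℝ) + 1) ^ m * x ^ (n + 1) / (1 - q ^ (n + 1)) := by
  have hd : ∀ n : ℕ, 0 < 1 - q ^ (n + 1) := fun n => by
    have : q ^ (n + 1) < 1 := pow_lt_one₀ hq0.le hq1 n.succ_ne_zero
    linarith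
  refine Summable.tsum_pos (aux_summable hq0 hq1 hx0.le hx1 m) (fun n => by
    have := hd n
    positivity) 0 (by
    have := hd 0
    positivity)

private lemma key_ineq {q x y : ℝ} (hq0 : 0 < q) (hq1 : q < 1) (hy0 : 0 < y) (hyx : y < x)
    (hx1 : x < 1) :
    (∑' n : ℕ, ((n : ℝ) + 1) * x ^ (n + 1) / (1 - q ^ (n + 1))) *
        (∑' n : ℕ, ((n : ℝ) + 1) ^ 2 * y ^ (n + 1) / (1 - q ^ (n + 1)))
      < (∑' n : ℕ, ((n : ℝ) + 1) * y ^ (n + 1) / (1 - q ^ (n + 1))) *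
        (∑' n : ℕ, ((n : ℝ) + 1) ^ 2 * x ^ (n + 1) / (1 - q ^ (n + 1))) := by
  have hx0 : 0 < x := hy0.trans hyx
  have hy1 : y < 1 := hyx.trans hx1
  have hd : ∀ n : ℕ, 0 < 1 - q ^ (n + 1) := fun n => by
    have : q ^ (n + 1) < 1 := pow_lt_one₀ hq0.le hq1 n.succ_ne_zero
    linarith
  set A : ℝ → ℕ → ℝ := fun t n => ((n : ℝ) + 1) * t ^ (n + 1) / (1 - q ^ (n + 1)) with hA
  set B : ℝ → ℕ → ℝ := fun t n => ((n : ℝ) + 1) ^ 2 * t ^ (n + 1) / (1 - q ^ (n + 1)) with hB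
  have hAx : Summable (A x) := by simpa [hA, pow_one] using aux_summable hq0 hq1 hx0.le hx1 1
  have hAy : Summable (A y) := by simpa [hA, pow_one] using aux_summable hq0 hq1 hy0.le hy1 1
  have hBx : Summable (B x) := aux_summable hq0 hq1 hx0.le hx1 2
  have hBy : Summable (B y) := aux_summable hq0 hq1 hy0.le hy1 2
  have hAnn : ∀ (t : ℝ), 0 ≤ t → ∀ n, 0 ≤ A t n := fun t ht n => by
    have := hd n; simp only [hA]; positivity
  have hBnn : ∀ (t : ℝ), 0 ≤ t → ∀ n, 0 ≤ B t n := fun t ht n => by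
    have := hd n; simp only [hB]; positivity
  have hP1 : Summable (fun p : ℕ × ℕ => A x p.1 * B y p.2) :=
    hAx.mul_of_nonneg hBy (hAnn x hx0.le) (hBnn y hy0.le)
  have hP2 : Summable (fun p : ℕ × ℕ => A y p.1 * B x p.2) :=
    hAy.mul_of_nonneg hBx (hAnn y hy0.le) (hBnn x hx0.le)
  rw [Summable.tsum_mul_tsum hAx hBy hP1, Summable.tsum_mul_tsum hAy hBx hP2, ← sub_neg,
    ← Summable.tsum_sub hP1 hP2]
  set F : ℕ × ℕ → ℝ := fun p => A x p.1 * B y p.2 - A y p.1 * B x p.2 with hF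
  have hFs : Summable F := hP1.sub hP2
  have hFsw : Summable (fun p : ℕ × ℕ => F p.swap) :=
    hFs.comp_injective (Equiv.prodComm ℕ ℕ).injective
  have hswap : ∑' p : ℕ × ℕ, F p.swap = ∑' p, F p := (Equiv.prodComm ℕ ℕ).tsum_eq F
  have hGfact : ∀ p : ℕ × ℕ, F p + F p.swap =
      (((p.1 : ℝ) + 1) * ((p.2 : ℝ) + 1) ^ 2 - ((p.2 : ℝ) + 1) * ((p.1 : ℝ) + 1) ^ 2) *
        ((1 - q ^ (p.1 + 1))⁻¹ * (1 - q ^ (p.2 + 1))⁻¹) *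
        (x ^ (p.1 + 1) * y ^ (p.2 + 1) - y ^ (p.1 + 1) * x ^ (p.2 + 1)) := by
    intro p
    simp only [hF, hA, hB, Prod.fst_swap, Prod.snd_swap, div_eq_mul_inv]
    ring
  have hmono : ∀ n m : ℕ, n ≤ m →
      x ^ (n + 1) * y ^ (m + 1) ≤ y ^ (n + 1) * x ^ (m + 1) := by
    intro n m hnm
    have e1 : y ^ (m + 1) = y ^ (n + 1) * y ^ (m - n) := by
      rw [← pow_add]
      congr 1
      omega
    have e2 : x ^ (m + 1) = x ^ (n + 1) * x ^ (m - n) := by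
      rw [← pow_add]
      congr 1
      omega
    rw [e1, e2]
    have hyk : y ^ (m - n) ≤ x ^ (m - n) := pow_le_pow_left₀ hy0.le hyx.le _
    calc x ^ (n + 1) * (y ^ (n + 1) * y ^ (m - n))
        = x ^ (n+1) * y ^ (n+1) * y ^ (m-n) := by ring
      _ ≤ x ^ (n+1) * y ^ (n+1) * x ^ (m-n) := by
          have h1 : (0:ℝ) ≤ x ^ (n+1) * y ^ (n+1) := by positivity
          nlinarith [pow_nonneg hy0.le (m-n)]
      _ = y ^ (n + 1) * (x ^ (n + 1) * x ^ (m - n)) := by ring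
  have hGle : ∀ p : ℕ × ℕ, F p + F p.swap ≤ 0 := by
    have main : ∀ n m : ℕ, n ≤ m →
        (((n : ℝ) + 1) * ((m : ℝ) + 1) ^ 2 - ((m : ℝ) + 1) * ((n : ℝ) + 1) ^ 2) *
          ((1 - q ^ (n + 1))⁻¹ * (1 - q ^ (m + 1))⁻¹) *
          (x ^ (n + 1) * y ^ (m + 1) - y ^ (n + 1) * x ^ (m + 1)) ≤ 0 := by
      intro n m hnm
      have h1 : (0:ℝ) ≤ ((n : ℝ) + 1) * ((m : ℝ) + 1) ^ 2 - ((m : ℝ) + 1) * ((n : ℝ) + 1) ^ 2 := by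
        have hcast : (n:ℝ) ≤ (m:ℝ) := by exact_mod_cast hnm
        have hfac : ((n : ℝ) + 1) * ((m : ℝ) + 1) ^ 2 - ((m : ℝ) + 1) * ((n : ℝ) + 1) ^ 2
            = ((n : ℝ) + 1) * ((m : ℝ) + 1) * ((m : ℝ) - (n : ℝ)) := by ring
        rw [hfac]
        have hn1 : (0:ℝ) ≤ (n : ℝ) + 1 := by positivity
        have hm1 : (0:ℝ) ≤ (m : ℝ) + 1 := by positivity
        exact mul_nonneg (mul_nonneg hn1 hm1) (sub_nonneg.2 hcast)
      have h2 : (0:ℝ) ≤ (1 - q ^ (n + 1))⁻¹ * (1 - q ^ (m + 1))⁻¹ := by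
        have := hd n; have := hd m; positivity
      have h3 : x ^ (n + 1) * y ^ (m + 1) - y ^ (n + 1) * x ^ (m + 1) ≤ 0 :=
        sub_nonpos.2 (hmono n m hnm)
      exact mul_nonpos_of_nonneg_of_nonpos (mul_nonneg h1 h2) h3
    intro p
    rw [hGfact p]
    rcases le_total p.1 p.2 with h | h
    · exact main p.1 p.2 h
    · have hm := main p.2 p.1 h
      calc (((p.1 : ℝ) + 1) * ((p.2 : ℝ) + 1) ^ 2 - ((p.2 : ℝ) + 1) * ((p.1 : ℝ) + 1) ^ 2) *
            ((1 - q ^ (p.1 + 1))⁻¹ * (1 - q ^ (p.2 + 1))⁻¹) *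
            (x ^ (p.1 + 1) * y ^ (p.2 + 1) - y ^ (p.1 + 1) * x ^ (p.2 + 1))
          = (((p.2 : ℝ) + 1) * ((p.1 : ℝ) + 1) ^ 2 - ((p.1 : ℝ) + 1) * ((p.2 : ℝ) + 1) ^ 2) *
            ((1 - q ^ (p.2 + 1))⁻¹ * (1 - q ^ (p.1 + 1))⁻¹) *
            (x ^ (p.2 + 1) * y ^ (p.1 + 1) - y ^ (p.2 + 1) * x ^ (p.1 + 1)) := by ring
        _ ≤ 0 := hm
  have hGlt : F (0, 1) + F ((0:ℕ), (1:ℕ)).swap < 0 := by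
    rw [hGfact ((0:ℕ), (1:ℕ))]
    apply mul_neg_of_pos_of_neg
    · apply mul_pos
      · norm_num
      · have := hd 0
        have := hd 1
        positivity
    · have h3 : x ^ (0 + 1) * y ^ (1 + 1) - y ^ (0 + 1) * x ^ (1 + 1) < 0 := by
        norm_num
        nlinarith [mul_pos (mul_pos hx0 hy0) (sub_pos.2 hyx)]
      exact h3
  have hGs : Summable (fun p : ℕ × ℕ => F p + F p.swap) := hFs.add hFsw
  have hsum_lt : ∑' p : ℕ × ℕ, (F p + F p.swap) < 0 := by
    calc ∑' p : ℕ × ℕ, (F p + F p.swap) < ∑' _ : ℕ × ℕ, (0:ℝ) :=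
          Summable.tsum_lt_tsum hGle hGlt hGs summable_zero
      _ = 0 := tsum_zero
  rw [Summable.tsum_add hFs hFsw, hswap] at hsum_lt
  linarith

private lemma Psi1_eq (q z : ℝ) (hq0 : 0 < q) :
    Psi1 q z = (Real.log q) ^ 2 *
      ∑' n : ℕ, ((n : ℝ) + 1) * (q ^ z) ^ (n + 1) / (1 - q ^ (n + 1)) := by
  unfold Psi1
  congr 1
  refine tsum_congr fun n => ?_
  congr 2
  rw [← Real.rpow_natCast (q ^ z) (n + 1), ← Real.rpow_mul hq0.le]
  congr 1
  push_cast
  ring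

private lemma Psi2_eq (q z : ℝ) (hq0 : 0 < q) :
    Psi2 q z = (Real.log q) ^ 3 *
      ∑' n : ℕ, ((n : ℝ) + 1) ^ 2 * (q ^ z) ^ (n + 1) / (1 - q ^ (n + 1)) := by
  unfold Psi2
  congr 1
  refine tsum_congr fun n => ?_
  congr 2
  rw [← Real.rpow_natCast (q ^ z) (n + 1), ← Real.rpow_mul hq0.le]
  congr 1
  push_cast
  ring

theorem stmt_14 (q a θ : ℝ) (hq0 : 0 < q) (hq1 : q < 1) (ha0 : 0 < a) (ha1 : a < 1)
    (hθ : Real.log a / Real.log q < θ) :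
    0 < (1 / 2) *
      ((Psi1 q (θ - Real.log a / Real.log q) / Psi1 q (θ + Real.log a / Real.log q)) *
          Psi2 q (θ + Real.log a / Real.log q) - Psi2 q (θ - Real.log a / Real.log q)) := by
  have hlq : Real.log q < 0 := Real.log_neg hq0 hq1
  have hla : Real.log a < 0 := Real.log_neg ha0 ha1
  set α := Real.log a / Real.log q with hα
  have hα0 : 0 < α := div_pos_of_neg_of_neg hla hlq
  have hz1 : 0 < θ - α := by linarith
  have hz12 : θ - α < θ + α := by linarith
  set x := q ^ (θ - α) with hx
  set y := q ^ (θ + α) with hy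
  have hx0 : 0 < x := Real.rpow_pos_of_pos hq0 _
  have hy0 : 0 < y := Real.rpow_pos_of_pos hq0 _
  have hx1 : x < 1 := Real.rpow_lt_one hq0.le hq1 hz1
  have hyx : y < x := Real.rpow_lt_rpow_of_exponent_gt hq0 hq1 hz12
  set S1x := ∑' n : ℕ, ((n : ℝ) + 1) * x ^ (n + 1) / (1 - q ^ (n + 1)) with hS1x
  set S1y := ∑' n : ℕ, ((n : ℝ) + 1) * y ^ (n + 1) / (1 - q ^ (n + 1)) with hS1y
  set S2x := ∑' n : ℕ, ((n : ℝ) + 1) ^ 2 * x ^ (n + 1) / (1 - q ^ (n + 1)) with hS2x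
  set S2y := ∑' n : ℕ, ((n : ℝ) + 1) ^ 2 * y ^ (n + 1) / (1 - q ^ (n + 1)) with hS2y
  have hy1 : y < 1 := hyx.trans hx1
  have hS1ypos : 0 < S1y := by
    have := aux_pos hq0 hq1 hy0 hy1 1
    simpa [pow_one] using this
  have hP1m : Psi1 q (θ - α) = (Real.log q) ^ 2 * S1x := Psi1_eq q _ hq0
  have hP1p : Psi1 q (θ + α) = (Real.log q) ^ 2 * S1y := Psi1_eq q _ hq0
  have hP2m : Psi2 q (θ - α) = (Real.log q) ^ 3 * S2x := Psi2_eq q _ hq0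
  have hP2p : Psi2 q (θ + α) = (Real.log q) ^ 3 * S2y := Psi2_eq q _ hq0
  have hP1ppos : 0 < Psi1 q (θ + α) := by
    rw [hP1p]
    have hl2 : 0 < (Real.log q) ^ 2 := by
      rw [sq]
      exact mul_pos_of_neg_of_neg hlq hlq
    exact mul_pos hl2 hS1ypos
  have hkey : S1x * S2y < S1y * S2x := key_ineq hq0 hq1 hy0 hyx hx1
  have hl5 : (Real.log q) ^ 5 < 0 := Odd.pow_neg (by decide) hlq
  have hmain : Psi2 q (θ - α) * Psi1 q (θ + α) < Psi1 q (θ - α) * Psi2 q (θ + α) := by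
    rw [hP1m, hP1p, hP2m, hP2p]
    have h1 : (Real.log q) ^ 3 * S2x * ((Real.log q) ^ 2 * S1y)
        = (Real.log q) ^ 5 * (S1y * S2x) := by ring
    have h2 : (Real.log q) ^ 2 * S1x * ((Real.log q) ^ 3 * S2y)
        = (Real.log q) ^ 5 * (S1x * S2y) := by ring
    rw [h1, h2]
    exact mul_lt_mul_of_neg_left hkey hl5
  have hfinal : 0 < (Psi1 q (θ - α) / Psi1 q (θ + α)) * Psi2 q (θ + α) - Psi2 q (θ - α) := by
    rw [div_mul_eq_mul_div, sub_pos, lt_div_iff₀ hP1ppos]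
    exact hmain
  linarith
end
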